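/- Let M, N, P be types carrying the discrete topology, R ⊆ M × N and S ⊆ N × P relations, and f : (ℕ → Bool) → M, h : (ℕ → Bool) → P continuous functions. If for every w : ℕ → Bool there exists b : N with (f w, b) ∈ R and (b, h w) ∈ S, then there exists a continuous function g : (ℕ → Bool) → N such that for every w, (f w, g w) ∈ R and (g w, h w) ∈ S. (Continuous selection lemma used to show flag commutes with composition of linear maps.) -/
import Mathlib

/-- Continuous selection lemma used to show that the flag modality commutes with
composition of linear maps. -/
theorem continuous_selection {M N P : Type*}
    [TopologicalSpace M] [DiscreteTopology M] [TopologicalSpace N] [DiscreteTopology N]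
    [TopologicalSpace P] [DiscreteTopology P]
    (R : Set (M × N)) (S : Set (N × P))
    (f : (ℕ → Bool) → M) (h : (ℕ → Bool) → P)
    (hf : Continuous f) (hh : Continuous h)
    (hex : ∀ w : ℕ → Bool, ∃ b : N, (f w, b) ∈ R ∧ (b, h w) ∈ S) :
    ∃ g : (ℕ → Bool) → N, Continuous g ∧ ∀ w : ℕ → Bool, (f w, g w) ∈ R ∧ (g w, h w) ∈ S := by
  have hN : Nonempty N := ⟨(hex (fun _ => false)).choose⟩
  classical
  let F : M × P → N := fun q =>
    if hq : ∃ b, (q.1, b) ∈ R ∧ (b, q.2) ∈ S then hq.choose else Classical.arbitrary N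
  refine ⟨fun w => F (f w, h w), ?_, ?_⟩
  · exact (continuous_of_discreteTopology (f := F)).comp (hf.prodMk hh)
  · intro w
    have hq : ∃ b, ((f w, h w).1, b) ∈ R ∧ (b, (f w, h w).2) ∈ S := hex w
    simpa [F, dif_pos hq] using hq.choose_spec
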